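/- Let A be a unital complex Banach algebra, f, i, D, I ∈ A, M = T(f,i) = ![![f, 0], ![i, f]] and P = T(D,I) = ![![D, 0], ![I, D]] in Matrix (Fin 2) (Fin 2) A. Set ρ = −∑'_{l : ℕ} ((l+1)! : ℂ)⁻¹ • (ad f)^[l] i, where (ad f)^[l] denotes the l-th iterate of the map x ↦ ⁅f, x⁆. Then exp(M) * P * exp(−M) = ![![exp f * D * exp(−f), 0], ![exp f * I * exp(−f) + ⁅exp f * D * exp(−f), ρ⁆, exp f * D * exp(−f)]]. (This is the formula e^{ad(f,i)}·(D,I) = (λ⁻¹Dλ, λ̃ I λ̄ + δ_{λ⁻¹Dλ}(ρ)) with λ⁻¹ = e^f from the proof of the main theorem, expressed in the matrix model; it shows that every gauge transform of (D,I) is a trivial deformation, with change of coordinates λ and homotopy ρ.) -/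

import Mathlib

/-!
Write `e = exp f`. The matrices `T a b` multiply like first-order jets, `T a b * T c d =
T (a * c) (b * c + a * d)`, so `exp (T f i) = T e g`, where `g` is the directional derivative of
`exp` at `f` along `i`. Expanding `x ↦ xⁿ` with left and right multiplication by `f` (which commute,
and differ by `ad f`) and resumming gives `g = ρ' * e` with `ρ' = ∑ (ad f)ˡ i / (l+1)!`. Since `exp (-T f i)` is the inverse
of `exp (T f i)`, it equals `T e⁻¹ (-(e⁻¹ * ρ'))`, and multiplying out the three factors gives the
claim with `ρ = -ρ'`.
-/

open NormedSpace

/-- For `a b : A`, `T a b` is the 2×2 matrix `![![a, 0], ![b, a]]`. -/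
def T {A : Type*} [Ring A] (a b : A) : Matrix (Fin 2) (Fin 2) A :=
  ![![a, 0], ![b, a]]

open Finset Nat

/-- `powDeriv a b n` is the derivative of `x ↦ x ^ n` at `a` in the direction `b`. -/
def powDeriv {A : Type*} [Ring A] (a b : A) (n : ℕ) : A :=
  ∑ k ∈ range n, a ^ k * b * a ^ (n - 1 - k)

/-- `phiAd a b = φ(ad a) b` with `φ z = (exp z - 1) / z`; then `phiAd a b * exp a` is the
derivative of `exp` at `a` in the direction `b`. -/
noncomputable def phiAd {A : Type*} [Ring A] [Algebra ℂ A] [TopologicalSpace A] (a b : A) : A :=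
  ∑' l : ℕ, (((l + 1)! : ℂ))⁻¹ • (fun x => ⁅a, x⁆)^[l] b

theorem Commute.sum_range_pow_mul_pow_eq_sum_choose {R : Type*} [Ring R] {x y : R}
    (h : Commute x y) (m : ℕ) :
    ∑ k ∈ range (m + 1), x ^ k * y ^ (m - k) =
      ∑ j ∈ range (m + 1), (m + 1).choose (j + 1) • ((x - y) ^ j * y ^ (m - j)) := by
  have hc : Commute (x - y) y := h.sub_left (Commute.refl y)
  calc
    ∑ k ∈ range (m + 1), x ^ k * y ^ (m - k)
        = ∑ k ∈ range (m + 1), ∑ j ∈ range (k + 1),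
            k.choose j • ((x - y) ^ j * y ^ (m - j)) := by
      refine sum_congr rfl fun k hk => ?_
      rw [mem_range, Nat.lt_succ_iff] at hk
      conv_lhs => rw [show x = x - y + y by abel, hc.add_pow, sum_mul]
      refine sum_congr rfl fun j hj => ?_
      rw [mem_range, Nat.lt_succ_iff] at hj
      rw [mul_assoc _ (k.choose j : R), Nat.cast_comm (k.choose j) (y ^ (m - k)), ← mul_assoc,
        mul_assoc ((x - y) ^ j), ← pow_add, show k - j + (m - k) = m - j by omega, nsmul_eq_mul,
        Nat.cast_comm]
    _ = ∑ j ∈ range (m + 1), ∑ k ∈ Ico j (m + 1), k.choose j • ((x - y) ^ j * y ^ (m - j)) := by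
      simp only [range_eq_Ico]
      exact (sum_Ico_Ico_comm 0 (m + 1) fun j k => k.choose j • ((x - y) ^ j * y ^ (m - j))).symm
    _ = ∑ j ∈ range (m + 1), (m + 1).choose (j + 1) • ((x - y) ^ j * y ^ (m - j)) := by
      refine sum_congr rfl fun j _ => ?_
      rw [← sum_smul, Ico_add_one_right_eq_Icc, Nat.sum_Icc_choose]

section Ring

variable {A : Type*} [Ring A]

theorem powDeriv_zero (a b : A) : powDeriv a b 0 = 0 := by
  simp [powDeriv]

theorem powDeriv_succ (a b : A) (n : ℕ) :
    powDeriv a b (n + 1) = powDeriv a b n * a + a ^ n * b := by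
  rw [powDeriv, sum_range_succ, Nat.add_sub_cancel, Nat.sub_self, pow_zero, mul_one, powDeriv,
    sum_mul]
  refine congrArg (· + _) (sum_congr rfl fun k hk => ?_)
  rw [mul_assoc _ (a ^ _), ← pow_succ, show n - 1 - k + 1 = n - k by grind]

theorem powDeriv_succ_eq_sum_iterate_lie (a b : A) (m : ℕ) :
    powDeriv a b (m + 1) =
      ∑ j ∈ range (m + 1), (m + 1).choose (j + 1) • ((fun x => ⁅a, x⁆)^[j] b * a ^ (m - j)) := by
  let L := LinearMap.mulLeft ℤ a
  let R := LinearMap.mulRight ℤ a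
  have hLR : Commute L R := LinearMap.commute_mulLeft_right a a
  have had : ⇑(L - R) = fun x => ⁅a, x⁆ := funext fun x => by simp [L, R, Ring.lie_def]
  have key : ∑ k ∈ range (m + 1), L ^ k * R ^ (m - k) =
      ∑ j ∈ range (m + 1), (m + 1).choose (j + 1) • (R ^ (m - j) * (L - R) ^ j) := by
    rw [hLR.sum_range_pow_mul_pow_eq_sum_choose]
    exact sum_congr rfl fun j _ => by
      rw [((hLR.sub_left (Commute.refl R)).pow_pow _ _).eq]
  have h := congrArg (fun F : Module.End ℤ A => F b) key
  simp only [LinearMap.coe_sum, Finset.sum_apply, LinearMap.smul_apply,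
    Module.End.mul_apply, Module.End.coe_pow, had, L, R, LinearMap.pow_mulLeft,
    LinearMap.pow_mulRight, LinearMap.mulLeft_apply, LinearMap.mulRight_apply] at h
  simpa only [powDeriv, add_tsub_cancel_right, ← mul_assoc] using h

theorem inv_factorial_smul_powDeriv_succ {𝕜 : Type*} [Field 𝕜] [CharZero 𝕜] [Algebra 𝕜 A]
    (a b : A) (m : ℕ) :
    (((m + 1)! : 𝕜))⁻¹ • powDeriv a b (m + 1) =
      ∑ k ∈ range (m + 1),
        (((k + 1)! : 𝕜))⁻¹ • (fun x => ⁅a, x⁆)^[k] b * (((m - k)! : 𝕜)⁻¹ • a ^ (m - k)) := by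
  rw [powDeriv_succ_eq_sum_iterate_lie, smul_sum]
  refine sum_congr rfl fun k hk => ?_
  have hkm : k + 1 ≤ m + 1 := by grind
  rw [smul_mul_smul_comm, ← Nat.cast_smul_eq_nsmul 𝕜, smul_smul, Nat.cast_choose 𝕜 hkm,
    show m + 1 - (k + 1) = m - k by omega]
  have : ((m + 1)! : 𝕜) ≠ 0 := mod_cast (m + 1).factorial_ne_zero
  congr 1
  field_simp

theorem T_mul (a b c d : A) : T a b * T c d = T (a * c) (b * c + a * d) := by
  ext x y
  fin_cases x <;> fin_cases y <;> simp [Matrix.mul_apply, Fin.sum_univ_two] <;> simp [T]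

theorem T_one : T (1 : A) 0 = 1 := by
  ext x y
  fin_cases x <;> fin_cases y <;> simp [T]

theorem T_neg (a b : A) : -T a b = T (-a) (-b) := by
  ext x y
  fin_cases x <;> fin_cases y <;> simp [Matrix.neg_apply] <;> simp [T]

theorem T_pow (a b : A) (n : ℕ) : T a b ^ n = T (a ^ n) (powDeriv a b n) := by
  induction n with
  | zero => rw [pow_zero, pow_zero, powDeriv_zero, T_one]
  | succ n ih => rw [pow_succ, ih, T_mul, ← pow_succ, powDeriv_succ]

end Ring

section Banach

variable {A : Type*} [NormedRing A]

theorem norm_iterate_lie_le (a b : A) (l : ℕ) :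
    ‖(fun x => ⁅a, x⁆)^[l] b‖ ≤ (2 * ‖a‖) ^ l * ‖b‖ := by
  induction l with
  | zero => simp
  | succ l ih =>
    rw [Function.iterate_succ_apply', Ring.lie_def]
    set z := (fun x => ⁅a, x⁆)^[l] b
    calc ‖a * z - z * a‖ ≤ ‖a‖ * ‖z‖ + ‖z‖ * ‖a‖ :=
          (norm_sub_le _ _).trans (add_le_add (norm_mul_le _ _) (norm_mul_le _ _))
      _ = 2 * ‖a‖ * ‖z‖ := by ring
      _ ≤ 2 * ‖a‖ * ((2 * ‖a‖) ^ l * ‖b‖) := by gcongr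
      _ = (2 * ‖a‖) ^ (l + 1) * ‖b‖ := by ring

variable [NormedAlgebra ℂ A]

theorem summable_norm_phiAd_series (a b : A) :
    Summable fun l => ‖(((l + 1)! : ℂ))⁻¹ • (fun x => ⁅a, x⁆)^[l] b‖ := by
  refine .of_nonneg_of_le (fun l => norm_nonneg _) (fun l => ?_)
    ((Real.summable_pow_div_factorial (2 * ‖a‖)).mul_right ‖b‖)
  rw [norm_smul, norm_inv, Complex.norm_natCast, div_mul_eq_mul_div, le_div_iff₀ (by positivity)]
  calc ((l + 1)! : ℝ)⁻¹ * ‖(fun x => ⁅a, x⁆)^[l] b‖ * l !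
      ≤ 1 * ((2 * ‖a‖) ^ l * ‖b‖) := by
        rw [mul_right_comm]
        gcongr
        · rw [inv_mul_le_one₀ (by positivity)]
          exact_mod_cast factorial_le l.le_succ
        · exact norm_iterate_lie_le a b l
    _ = (2 * ‖a‖) ^ l * ‖b‖ := one_mul _

variable [CompleteSpace A]

theorem exp_mul_exp_neg (x : A) : exp x * exp (-x) = 1 := by
  have hball (y : A) : y ∈ Metric.eball (0 : A) (expSeries ℂ A).radius := by
    simp [expSeries_radius_eq_top, Metric.eball]
  rw [← exp_add_of_commute_of_mem_ball (Commute.refl x).neg_right (hball x) (hball (-x)),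
    add_neg_cancel, exp_zero]

theorem exp_neg_mul_exp (x : A) : exp (-x) * exp x = 1 := by
  simpa using exp_mul_exp_neg (-x)

section MatrixExp

variable {m : Type*} [Fintype m] [DecidableEq m]

-- The operator norm makes `Matrix m m A` a Banach algebra; its topology is the entrywise one.
theorem Matrix.exp_mul_exp_neg (M : Matrix m m A) : exp M * exp (-M) = 1 := by
  open scoped Matrix.Norms.Operator in
  have : @CompleteSpace (Matrix m m A) PseudoMetricSpace.toUniformSpace :=
    inferInstanceAs (CompleteSpace (m → m → A))
  open scoped Matrix.Norms.Operator in
  exact _root_.exp_mul_exp_neg M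

theorem Matrix.hasSum_expSeries_apply (M : Matrix m m A) (i j : m) :
    HasSum (fun n => (n !⁻¹ : ℂ) • (M ^ n) i j) (exp M i j) := by
  open scoped Matrix.Norms.Operator in
  have : @CompleteSpace (Matrix m m A) PseudoMetricSpace.toUniformSpace :=
    inferInstanceAs (CompleteSpace (m → m → A))
  open scoped Matrix.Norms.Operator in
  have h : HasSum (fun n => (n !⁻¹ : ℂ) • M ^ n) (exp M) := exp_series_hasSum_exp' M
  exact Pi.hasSum.mp (Pi.hasSum.mp h i) j

end MatrixExp

theorem hasSum_expSeries_powDeriv (a b : A) :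
    HasSum (fun n => (n !⁻¹ : ℂ) • powDeriv a b n) (phiAd a b * exp a) := by
  have hcauchy := hasSum_sum_range_mul_of_summable_norm (summable_norm_phiAd_series a b)
    (norm_expSeries_summable' (𝕂 := ℂ) a)
  rw [(exp_series_hasSum_exp' a).tsum_eq] at hcauchy
  rw [← hasSum_nat_add_iff' 1, sum_range_one, powDeriv_zero, smul_zero, sub_zero]
  simpa only [inv_factorial_smul_powDeriv_succ, phiAd] using hcauchy

theorem exp_T (a b : A) : exp (T a b) = T (exp a) (phiAd a b * exp a) := by
  have h := Matrix.hasSum_expSeries_apply (T a b)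
  simp only [T_pow] at h
  ext i j
  fin_cases i <;> fin_cases j
  · exact (h 0 0).unique (exp_series_hasSum_exp' a)
  · exact (h 0 1).unique (by simp [T])
  · exact (h 1 0).unique (hasSum_expSeries_powDeriv a b)
  · exact (h 1 1).unique (exp_series_hasSum_exp' a)

theorem exp_neg_T (a b : A) : exp (-T a b) = T (exp (-a)) (-(exp (-a) * phiAd a b)) := by
  set g := phiAd (-a) (-b) * exp (-a)
  have hinv := Matrix.exp_mul_exp_neg (T a b)
  rw [T_neg, exp_T, exp_T, T_mul, exp_mul_exp_neg, ← T_one] at hinv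
  have hg : phiAd a b + exp a * g = 0 := by
    simpa [T, mul_assoc, exp_mul_exp_neg] using congrArg (· 1 0) hinv
  rw [T_neg, exp_T]
  congr 1
  calc g = exp (-a) * (exp a * g) := by rw [← mul_assoc, exp_neg_mul_exp, one_mul]
    _ = -(exp (-a) * phiAd a b) := by rw [eq_neg_of_add_eq_zero_right hg, mul_neg]

end Banach

/-- The gauge transform of `(D, I)` is a trivial deformation: with `M = T f i`,
`P = T D I` and homotopy `ρ = -∑'_{l} ((l+1)!)⁻¹ • (ad f)^[l] i`, one has
`exp M * P * exp (-M) = ![![eᶠDe⁻ᶠ, 0], ![eᶠIe⁻ᶠ + ⁅eᶠDe⁻ᶠ, ρ⁆, eᶠDe⁻ᶠ]]`. -/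
theorem stmt5 {A : Type*} [NormedRing A] [NormedAlgebra ℂ A] [CompleteSpace A]
    (f i D I : A) :
    exp (T f i) * T D I * exp (-(T f i)) =
      let ρ : A := -∑' l : ℕ, (((l + 1).factorial : ℂ))⁻¹ • (fun x => ⁅f, x⁆)^[l] i
      ![![exp f * D * exp (-f), 0],
        ![exp f * I * exp (-f) + ⁅exp f * D * exp (-f), ρ⁆,
          exp f * D * exp (-f)]] := by
  show _ = T (exp f * D * exp (-f))
    (exp f * I * exp (-f) + ⁅exp f * D * exp (-f), -phiAd f i⁆)
  rw [exp_neg_T, exp_T, T_mul, T_mul, Ring.lie_def]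
  congr 1
  noncomm_ring
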